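/- Let (a_i) be defined by a_1 = 1 and a_{i+1} = 2^{a_i^2}. Let x = [0; a_1, a_2, …] and q_j the denominators of its convergents. Then (log q_{j+1})/q_j does not converge to 0 as j → ∞; in fact (log q_{j+1})/q_j → ∞. -/

import Mathlib

open Filter Topology Finset

/- Since `q_{j+1} ≥ a_{j+1} = 2^{a_j^2}`, it suffices that `a_j^2 / q_j → ∞`. The recursion
gives `q_j ≤ 2 a_j q_{j-1}` and, by induction, `q_{j-1} ≤ a_j`; combining them over two steps
gives `q_j ≤ 4 a_j a_{j-1}^2`, so `a_j^2 / q_j ≥ 2^{m^2} / (4 m^2)` with `m = a_{j-1}`, which is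
at least `m` once `m ≥ 4`. -/

def a10 : ℕ → ℕ
  | 0 => 1
  | 1 => 1
  | (n+2) => 2 ^ (a10 (n+1))^2

def qd (a : ℕ → ℕ) : ℕ → ℕ
  | 0 => 1
  | 1 => a 1
  | (n+2) => a (n+2) * qd a (n+1) + qd a n

section Continuant

variable {a : ℕ → ℕ}

lemma qd_pos (ha : 0 < a 1) : ∀ n, 0 < qd a n
  | 0 => Nat.one_pos
  | 1 => ha
  | n + 2 => Nat.add_pos_right _ (qd_pos ha n)

lemma le_qd_succ (ha : ∀ n, 0 < a n) (n : ℕ) : a (n + 1) ≤ qd a (n + 1) := by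
  cases n with
  | zero => exact le_rfl
  | succ n =>
    show a (n + 2) ≤ a (n + 2) * qd a (n + 1) + qd a n
    exact (Nat.le_mul_of_pos_right _ (qd_pos (ha 1) _)).trans (Nat.le_add_right _ _)

lemma qd_le_qd_succ (ha : ∀ n, 0 < a n) (n : ℕ) : qd a n ≤ qd a (n + 1) := by
  cases n with
  | zero => exact ha 1
  | succ n =>
    show qd a (n + 1) ≤ a (n + 2) * qd a (n + 1) + qd a n
    exact (Nat.le_mul_of_pos_left _ (ha _)).trans (Nat.le_add_right _ _)

lemma qd_succ_le (ha : ∀ n, 0 < a n) (n : ℕ) : qd a (n + 1) ≤ 2 * a (n + 1) * qd a n := by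
  cases n with
  | zero => show a 1 ≤ 2 * a 1 * 1; omega
  | succ n =>
    show a (n + 2) * qd a (n + 1) + qd a n ≤ 2 * a (n + 2) * qd a (n + 1)
    have := (qd_le_qd_succ ha n).trans (Nat.le_mul_of_pos_left (qd a (n + 1)) (ha (n + 2)))
    linarith

end Continuant

lemma a10_add_two (n : ℕ) : a10 (n + 2) = 2 ^ a10 (n + 1) ^ 2 := rfl

lemma a10_pos : ∀ n, 0 < a10 n
  | 0 | 1 => Nat.one_pos
  | _ + 2 => Nat.two_pow_pos _

lemma le_a10 : ∀ n, n ≤ a10 n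
  | 0 => Nat.zero_le _
  | 1 => le_rfl
  | n + 2 => by
    have hsq : a10 (n + 1) ≤ a10 (n + 1) ^ 2 := Nat.le_self_pow two_ne_zero _
    have := le_a10 (n + 1)
    have := Nat.lt_two_pow_self (n := a10 (n + 1) ^ 2)
    rw [a10_add_two]
    omega

lemma qd_a10_le : ∀ n, qd a10 n ≤ a10 (n + 1)
  | 0 => le_rfl
  | n + 1 =>
    calc qd a10 (n + 1) ≤ 2 * a10 (n + 1) * qd a10 n := qd_succ_le a10_pos n
      _ ≤ 2 * a10 (n + 1) * a10 (n + 1) := Nat.mul_le_mul_left _ (qd_a10_le n)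
      _ = 2 * a10 (n + 1) ^ 2 := by ring
      _ ≤ a10 (n + 2) := Nat.mul_le_pow (by decide) _

lemma four_mul_cube_le_two_pow_sq {m : ℕ} (hm : 4 ≤ m) : 4 * m ^ 3 ≤ 2 ^ m ^ 2 :=
  calc 4 * m ^ 3 ≤ 4 * (2 ^ m) ^ 3 := by gcongr; exact Nat.lt_two_pow_self.le
    _ = 2 ^ (3 * m + 2) := by ring
    _ ≤ 2 ^ m ^ 2 := Nat.pow_le_pow_right two_pos (by nlinarith)

lemma a10_mul_qd_a10_le_sq {n : ℕ} (h : 4 ≤ a10 (n + 1)) :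
    a10 (n + 1) * qd a10 (n + 2) ≤ a10 (n + 2) ^ 2 := by
  set m := a10 (n + 1)
  have hq : qd a10 (n + 2) ≤ 4 * a10 (n + 2) * m ^ 2 :=
    calc qd a10 (n + 2) ≤ 2 * a10 (n + 2) * qd a10 (n + 1) := qd_succ_le a10_pos _
      _ ≤ 2 * a10 (n + 2) * (2 * m * qd a10 n) := by gcongr; exact qd_succ_le a10_pos n
      _ ≤ 2 * a10 (n + 2) * (2 * m * m) := by gcongr; exact qd_a10_le n
      _ = 4 * a10 (n + 2) * m ^ 2 := by ring
  have hm : 4 * m ^ 3 ≤ a10 (n + 2) := four_mul_cube_le_two_pow_sq h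
  calc m * qd a10 (n + 2) ≤ m * (4 * a10 (n + 2) * m ^ 2) := Nat.mul_le_mul_left _ hq
    _ = 4 * m ^ 3 * a10 (n + 2) := by ring
    _ ≤ a10 (n + 2) * a10 (n + 2) := Nat.mul_le_mul_right _ hm
    _ = a10 (n + 2) ^ 2 := (sq _).symm

lemma sq_a10_mul_log_two_le_log_qd (n : ℕ) :
    (a10 (n + 1) : ℝ) ^ 2 * Real.log 2 ≤ Real.log (qd a10 (n + 2)) := by
  have hle : (a10 (n + 2) : ℝ) ≤ qd a10 (n + 2) := by exact_mod_cast le_qd_succ a10_pos (n + 1)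
  calc (a10 (n + 1) : ℝ) ^ 2 * Real.log 2 = Real.log (a10 (n + 2)) := by
        rw [a10_add_two, Nat.cast_pow, Nat.cast_ofNat, Real.log_pow, Nat.cast_pow]
    _ ≤ Real.log (qd a10 (n + 2)) := Real.log_le_log (by exact_mod_cast a10_pos _) hle

lemma log_two_mul_a10_le {n : ℕ} (h : 4 ≤ a10 (n + 1)) :
    Real.log 2 * a10 (n + 1) ≤ Real.log (qd a10 (n + 3)) / qd a10 (n + 2) := by
  have hq : (0 : ℝ) < qd a10 (n + 2) := by exact_mod_cast qd_pos (a10_pos 1) _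
  have hkey : (a10 (n + 1) : ℝ) * qd a10 (n + 2) ≤ (a10 (n + 2) : ℝ) ^ 2 := by
    exact_mod_cast a10_mul_qd_a10_le_sq h
  rw [le_div_iff₀ hq]
  calc Real.log 2 * a10 (n + 1) * qd a10 (n + 2)
      ≤ (a10 (n + 2) : ℝ) ^ 2 * Real.log 2 := by
        nlinarith [Real.log_pos one_lt_two]
    _ ≤ Real.log (qd a10 (n + 3)) := sq_a10_mul_log_two_le_log_qd (n + 1)

/-- For `a_1 = 1`, `a_{i+1} = 2^{a_i^2}`, the ratio `log q_{j+1}/q_j` does not tend to `0`;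
in fact it tends to `∞`. -/
theorem stmt10 :
    ¬ Tendsto (fun j : ℕ => Real.log (qd a10 (j+1)) / (qd a10 j : ℝ)) atTop (nhds 0) ∧
      Tendsto (fun j : ℕ => Real.log (qd a10 (j+1)) / (qd a10 j : ℝ)) atTop atTop := by
  have ha : Tendsto (fun n => Real.log 2 * a10 (n + 1)) atTop atTop :=
    (tendsto_natCast_atTop_atTop.comp <| (tendsto_add_atTop_iff_nat 1).2 <|
      tendsto_atTop_mono le_a10 tendsto_id).const_mul_atTop (Real.log_pos one_lt_two)
  have htop : Tendsto (fun j : ℕ => Real.log (qd a10 (j+1)) / (qd a10 j : ℝ)) atTop atTop := by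
    rw [← tendsto_add_atTop_iff_nat 2]
    refine tendsto_atTop_mono' _ ?_ ha
    filter_upwards [eventually_ge_atTop 3] with n hn
    exact log_two_mul_a10_le ((by omega : 4 ≤ n + 1).trans (le_a10 _))
  exact ⟨not_tendsto_nhds_of_tendsto_atTop htop 0, htop⟩
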